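/- For the ring R = ℤ[t]/(t²−1), the first Ext group Ext¹_R(R/I, R/(2,I)) is isomorphic as an R-module to R/(2,I) (in particular, as an abelian group it is ℤ/2), where I = (t−1) and R/(2,I) is the quotient of R by the ideal generated by 2 and t−1. Consequently, any R-module M fitting into a short exact sequence 0 → R/(2,I) → M → R/I → 0 is isomorphic as an R-module either to (R/I) ⊕ (R/(2,I)) or to R/2I. -/

import Mathlib

noncomputable section

abbrev R : Type := Polynomial ℤ ⧸ Ideal.span ({Polynomial.X ^ 2 - 1} : Set (Polynomial ℤ))

def t : R := Ideal.Quotient.mk _ Polynomial.X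

def I : Ideal R := Ideal.span {t - 1}
def J : Ideal R := Ideal.span {t + 1}


/-- `Ext¹_R(M, N)`, the first Ext group of the `R`-modules `M` and `N`, defined via the
derived-functor `Ext` bifunctor on the category of `R`-modules. -/
def ext1 (M N : Type) [AddCommGroup M] [Module R M] [AddCommGroup N] [Module R N] :
    ModuleCat R :=
  ((Ext R (ModuleCat R) 1).obj (Opposite.op (ModuleCat.of R M))).obj (ModuleCat.of R N)

/-!
In `R` the annihilator of `t - 1` is `(t + 1)` and vice versa, so `R ⧸ I` has the 2-periodic free
resolution `⋯ → R --(t+1)--> R --(t-1)--> R → R ⧸ I`. Both `t - 1` and `t + 1` kill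
`k = R ⧸ (2, t - 1)`, hence every differential of `Hom_R(-, k)` vanishes and
`Ext¹_R(R ⧸ I, k) ≅ Hom_R(R, k) ≅ k`.

Given an extension `0 → k → M → R ⧸ I → 0`, lift `1` to `m : M`. Then `(t - 1) • m` lies in the
image of `k = {0, 1}`. If it is `0`, then `1 ↦ m` splits the sequence. Otherwise
`(t - 1) • m = f 1`, so `M` is cyclic on `m` with annihilator `(2, t - 1) * I = 2 * I`.
-/

open CategoryTheory

universe u

section PeriodicResolution

def alternating {α : Type*} (a b : α) : ℕ → α
  | 0 => a
  | n + 1 => alternating b a n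

theorem alternating_eq_or {α : Type*} (a b : α) (n : ℕ) :
    alternating a b n = a ∨ alternating a b n = b := by
  induction n generalizing a b with
  | zero => exact .inl rfl
  | succ n ih => exact (ih b a).symm

variable {S : Type u} [CommRing S]

structure IsExactPair (a b : S) : Prop where
  mul_left_eq_zero_iff : ∀ x, x * a = 0 ↔ b ∣ x
  mul_right_eq_zero_iff : ∀ x, x * b = 0 ↔ a ∣ x

theorem IsExactPair.symm {a b : S} (h : IsExactPair a b) : IsExactPair b a :=
  ⟨h.mul_right_eq_zero_iff, h.mul_left_eq_zero_iff⟩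

theorem IsExactPair.mul_alternating_eq_zero_iff {a b : S} (h : IsExactPair a b) (n : ℕ) (x : S) :
    x * alternating a b n = 0 ↔ alternating a b (n + 1) ∣ x := by
  induction n generalizing a b with
  | zero => exact h.mul_left_eq_zero_iff x
  | succ n ih => exact ih h.symm

theorem IsExactPair.alternating_succ_mul {a b : S} (h : IsExactPair a b) (n : ℕ) :
    alternating a b (n + 1) * alternating a b n = 0 :=
  (h.mul_alternating_eq_zero_iff n _).2 dvd_rfl

def mulRightHom (c : S) : ModuleCat.of S S ⟶ ModuleCat.of S S :=
  ModuleCat.ofHom (LinearMap.mulRight S c)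

theorem mulRightHom_comp (c d : S) : mulRightHom c ≫ mulRightHom d = mulRightHom (c * d) := by
  ext
  exact mul_assoc _ c d

theorem mulRightHom_zero : mulRightHom (0 : S) = 0 := by
  ext
  exact mul_zero _

variable {a b : S} (h : IsExactPair a b)

def IsExactPair.complex : ChainComplex (ModuleCat S) ℕ :=
  ChainComplex.of (fun _ => ModuleCat.of S S) (fun n => mulRightHom (alternating a b n))
    fun n => by rw [mulRightHom_comp, h.alternating_succ_mul, mulRightHom_zero]

theorem IsExactPair.complex_d (n : ℕ) :
    h.complex.d (n + 1) n = mulRightHom (alternating a b n) :=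
  ChainComplex.of_d (fun _ => ModuleCat.of S S) (fun n => mulRightHom (alternating a b n)) n

theorem IsExactPair.complex_d_apply (n : ℕ) (x : S) :
    (h.complex.d (n + 1) n).hom x = x * alternating a b n := by
  rw [h.complex_d]
  rfl

theorem IsExactPair.complex_exactAt_succ (n : ℕ) : h.complex.ExactAt (n + 1) := by
  rw [HomologicalComplex.exactAt_iff' _ (n + 2) (n + 1) n (by simp) (by simp),
    ShortComplex.moduleCat_exact_iff]
  intro (x : S) hx
  change (h.complex.d (n + 1) n).hom x = 0 at hx
  change ∃ y : S, (h.complex.d (n + 2) (n + 1)).hom y = x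
  simp only [complex_d_apply] at hx ⊢
  obtain ⟨y, rfl⟩ := (h.mul_alternating_eq_zero_iff n x).1 hx
  exact ⟨y, mul_comm y _⟩

def quotientAugmentation (a : S) : ModuleCat.of S S ⟶ ModuleCat.of S (S ⧸ Ideal.span {a}) :=
  ModuleCat.ofHom (Ideal.span {a}).mkQ

theorem mulRightHom_comp_quotientAugmentation (a : S) :
    mulRightHom a ≫ quotientAugmentation a = 0 := by
  ext
  exact (Submodule.Quotient.mk_eq_zero _).2
    (Ideal.mul_mem_left _ _ (Ideal.mem_span_singleton_self a))

theorem exact_mulRightHom_quotientAugmentation (a : S) :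
    (ShortComplex.mk _ _ (mulRightHom_comp_quotientAugmentation a)).Exact := by
  rw [ShortComplex.moduleCat_exact_iff]
  intro x hx
  obtain ⟨y, rfl⟩ := Ideal.mem_span_singleton'.1 ((Submodule.Quotient.mk_eq_zero _).1 hx)
  exact ⟨y, rfl⟩

theorem quotientAugmentation_surjective (a : S) : Function.Surjective (quotientAugmentation a) :=
  (Ideal.span {a}).mkQ_surjective

instance (n : ℕ) : Projective (h.complex.X n) :=
  ModuleCat.projective_of_free (Module.Basis.singleton Unit S)

def IsExactPair.resolution :
    ProjectiveResolution (ModuleCat.of S (S ⧸ Ideal.span {a})) where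
  complex := h.complex
  π := (ChainComplex.toSingle₀Equiv _ _).symm
    ⟨quotientAugmentation a, by rw [h.complex_d]; exact mulRightHom_comp_quotientAugmentation a⟩
  quasiIso := ⟨fun n => by
    cases n with
    | zero =>
      rw [ChainComplex.quasiIsoAt₀_iff, ShortComplex.quasiIso_iff_of_zeros' _ rfl rfl rfl]
      refine (ShortComplex.exact_and_epi_g_iff_of_iso ?_).2
        ⟨exact_mulRightHom_quotientAugmentation a,
          (ModuleCat.epi_iff_surjective _).2 (quotientAugmentation_surjective a)⟩
      exact ShortComplex.isoMk (Iso.refl _) (Iso.refl _) (Iso.refl _) rfl rfl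
    | succ n =>
      rw [quasiIsoAt_iff_exactAt' _ _ (ChainComplex.exactAt_succ_single_obj _ n)]
      exact h.complex_exactAt_succ n⟩

variable {N : Type u} [AddCommGroup N] [Module S N]

theorem IsExactPair.linearYonedaObj_d_eq_zero (ha : a ∈ Module.annihilator S N)
    (hb : b ∈ Module.annihilator S N) (n : ℕ) :
    (h.complex.linearYonedaObj S (ModuleCat.of S N)).d n (n + 1) = 0 := by
  rw [ChainComplex.linearYonedaObj_d, h.complex_d]
  ext φ
  change φ.hom ((1 : S) * alternating a b n) = 0
  rw [mul_comm]
  refine (φ.hom.map_smul (alternating a b n) (1 : S)).trans ?_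
  rcases alternating_eq_or a b n with e | e <;> rw [e]
  exacts [Module.mem_annihilator.1 ha _, Module.mem_annihilator.1 hb _]

def IsExactPair.extSuccLinearEquiv (ha : a ∈ Module.annihilator S N)
    (hb : b ∈ Module.annihilator S N) (n : ℕ) :
    ((Ext S (ModuleCat S) (n + 1)).obj (Opposite.op (ModuleCat.of S (S ⧸ Ideal.span {a})))).obj
      (ModuleCat.of S N) ≃ₗ[S] N :=
  (h.resolution.isoExt (n + 1) _ ≪≫
    HomologicalComplex.homologyIsoSc' _ n (n + 1) (n + 2) (by simp) (by simp) ≪≫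
    (ShortComplex.HomologyData.ofZeros _ (h.linearYonedaObj_d_eq_zero ha hb n)
      (h.linearYonedaObj_d_eq_zero ha hb (n + 1))).left.homologyIso).toLinearEquiv ≪≫ₗ
  ModuleCat.homLinearEquiv (S := S) ≪≫ₗ LinearMap.ringLmapEquivSelf S S N

end PeriodicResolution

section Extension

variable {S : Type*} [CommRing S] {K : Ideal S} {c : S} {M : Type*} [AddCommGroup M] [Module S M]
  {f : S ⧸ K →ₗ[S] M} {g : M →ₗ[S] S ⧸ Ideal.span {c}} {m : M}

theorem Function.Exact.nonempty_linearEquiv_prod_of_smul_eq_zero (hfg : Function.Exact f g)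
    (hf : Function.Injective f) (hm : g m = 1) (hcm : c • m = 0) :
    Nonempty (M ≃ₗ[S] (S ⧸ Ideal.span {c}) × (S ⧸ K)) := by
  have hl : g ∘ₗ Submodule.liftQSpanSingleton c (LinearMap.toSpanSingleton S M m)
      (by simpa using hcm) = LinearMap.id := by
    refine Submodule.linearMap_qext _ (LinearMap.ext_ring ?_)
    change g (Submodule.liftQSpanSingleton _ _ _ (Submodule.Quotient.mk 1)) =
      Submodule.Quotient.mk 1
    rw [Submodule.liftQSpanSingleton_apply, LinearMap.toSpanSingleton_apply, one_smul]
    exact hm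
  exact ⟨(hfg.splitSurjectiveEquiv hf ⟨_, hl⟩).1 ≪≫ₗ LinearEquiv.prodComm S _ _⟩

theorem Function.Exact.exists_map_eq_smul (hfg : Function.Exact f g) (hm : g m = 1) :
    ∃ ε, f ε = c • m := by
  refine (hfg (c • m)).1 ?_
  rw [map_smul, hm, Algebra.smul_def, mul_one, Ideal.Quotient.algebraMap_eq,
    Ideal.Quotient.eq_zero_iff_mem]
  exact Ideal.mem_span_singleton_self c

theorem map_mk_eq_mul_smul (hcm : c • m = f 1) (s : S) : f (Ideal.Quotient.mk K s) = (s * c) • m := by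
  rw [mul_smul, hcm, ← map_smul, Algebra.smul_def, mul_one]
  rfl

theorem smul_eq_zero_iff_mem_mul_span_singleton (hf : Function.Injective f) (hm : g m = 1)
    (hcm : c • m = f 1) (x : S) : x • m = 0 ↔ x ∈ K * Ideal.span {c} := by
  rw [Ideal.mem_mul_span_singleton]
  constructor
  · intro hx
    have hxc : x ∈ Ideal.span {c} := by
      rw [← Ideal.Quotient.eq_zero_iff_mem, ← mul_one (Ideal.Quotient.mk _ x), ← hm,
        ← Ideal.Quotient.algebraMap_eq, ← Algebra.smul_def, ← map_smul, hx, map_zero]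
    obtain ⟨s, rfl⟩ := Ideal.mem_span_singleton'.1 hxc
    refine ⟨s, ?_, rfl⟩
    rw [← Ideal.Quotient.eq_zero_iff_mem]
    exact hf (by rw [map_mk_eq_mul_smul hcm, hx, map_zero])
  · rintro ⟨s, hs, rfl⟩
    rw [← map_mk_eq_mul_smul hcm, Ideal.Quotient.eq_zero_iff_mem.2 hs, map_zero]

theorem Function.Exact.toSpanSingleton_surjective (hfg : Function.Exact f g) (hm : g m = 1)
    (hcm : c • m = f 1) : Function.Surjective (LinearMap.toSpanSingleton S M m) := by
  intro y
  obtain ⟨r, hr⟩ := Ideal.Quotient.mk_surjective (g y)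
  obtain ⟨z, hz⟩ := (hfg (y - r • m)).1 (by
    rw [map_sub, map_smul, hm, Algebra.smul_def, mul_one, Ideal.Quotient.algebraMap_eq, hr,
      sub_self])
  obtain ⟨s, rfl⟩ := Ideal.Quotient.mk_surjective z
  refine ⟨r + s * c, ?_⟩
  rw [LinearMap.toSpanSingleton_apply, add_smul, ← map_mk_eq_mul_smul hcm, hz, add_sub_cancel]

theorem Function.Exact.nonempty_linearEquiv_quotient_mul (hfg : Function.Exact f g)
    (hf : Function.Injective f) (hm : g m = 1) (hcm : c • m = f 1) :
    Nonempty (M ≃ₗ[S] S ⧸ K * Ideal.span {c}) := by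
  have hker : LinearMap.ker (LinearMap.toSpanSingleton S M m) = K * Ideal.span {c} := by
    ext x
    exact smul_eq_zero_iff_mem_mul_span_singleton hf hm hcm x
  exact ⟨((LinearMap.toSpanSingleton S M m).quotKerEquivOfSurjective
    (hfg.toSpanSingleton_surjective hm hcm)).symm ≪≫ₗ Submodule.quotEquivOfEq _ _ hker⟩

end Extension

section QuotientByProduct

variable {D : Type*} [CommRing D] [IsDomain D] {p q d : D}

theorem mul_mk_eq_zero_iff_mk_dvd (hp : p ≠ 0) (hd : p * q = d) (x : D ⧸ Ideal.span {d}) :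
    x * Ideal.Quotient.mk _ p = 0 ↔ Ideal.Quotient.mk _ q ∣ x := by
  constructor
  · obtain ⟨y, rfl⟩ := Ideal.Quotient.mk_surjective x
    rw [← map_mul, Ideal.Quotient.eq_zero_iff_mem, Ideal.mem_span_singleton, ← hd, mul_comm p q,
      mul_dvd_mul_iff_right hp]
    exact map_dvd _
  · rintro ⟨z, rfl⟩
    rw [mul_right_comm, ← map_mul, mul_comm q p, hd,
      Ideal.Quotient.eq_zero_iff_mem.2 (Ideal.mem_span_singleton_self d), zero_mul]

theorem isExactPair_mk_of_mul_eq (hp : p ≠ 0) (hq : q ≠ 0) (hd : p * q = d) :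
    IsExactPair (Ideal.Quotient.mk (Ideal.span {d}) p) (Ideal.Quotient.mk _ q) :=
  ⟨mul_mk_eq_zero_iff_mk_dvd hp hd, mul_mk_eq_zero_iff_mk_dvd hq ((mul_comm q p).trans hd)⟩

end QuotientByProduct

theorem intCast_eq_zero_or_eq_one_of_two_eq_zero {A : Type*} [Ring A] (h : (2 : A) = 0) (n : ℤ) :
    (n : A) = 0 ∨ (n : A) = 1 := by
  obtain ⟨m, rfl | rfl⟩ := Int.even_or_odd' n
  · left
    rw [Int.cast_mul, Int.cast_ofNat, h, zero_mul]
  · right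
    rw [Int.cast_add, Int.cast_mul, Int.cast_ofNat, h, zero_mul, zero_add, Int.cast_one]

open Polynomial

theorem isExactPair_t : IsExactPair (t - 1) (t + 1) := by
  simpa [t] using isExactPair_mk_of_mul_eq (X_sub_C_ne_zero (1 : ℤ)) (X_add_C_ne_zero 1)
    (d := X ^ 2 - 1) (by rw [C_1]; ring)

theorem t_sq : t ^ 2 = 1 := by
  rw [← sub_eq_zero, t, ← map_pow, ← map_one (Ideal.Quotient.mk _), ← map_sub,
    Ideal.Quotient.eq_zero_iff_mem]
  exact Ideal.subset_span rfl

theorem exists_intCast_sub_mem_I (r : R) : ∃ n : ℤ, r - n ∈ I := by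
  obtain ⟨p, rfl⟩ := Ideal.Quotient.mk_surjective r
  obtain ⟨q, hq⟩ := X_sub_C_dvd_sub_C_eval (a := (1 : ℤ)) (p := p)
  refine ⟨p.eval 1, Ideal.mem_span_singleton'.2 ⟨Ideal.Quotient.mk _ q, ?_⟩⟩
  have hC : (Ideal.Quotient.mk _ (C (p.eval 1)) : R) = (p.eval 1 : ℤ) := by simp
  rw [← hC, ← map_sub, hq, map_mul, mul_comm]
  simp [t]

theorem quotient_span_two_t_sub_one_eq_zero_or_eq_one (x : R ⧸ Ideal.span {2, t - 1}) :
    x = 0 ∨ x = 1 := by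
  obtain ⟨r, rfl⟩ := Ideal.Quotient.mk_surjective x
  obtain ⟨n, hn⟩ := exists_intCast_sub_mem_I r
  have hI : I ≤ Ideal.span {2, t - 1} := Ideal.span_mono (by simp)
  rw [← sub_add_cancel r n, map_add, Ideal.Quotient.eq_zero_iff_mem.2 (hI hn), zero_add,
    map_intCast]
  exact intCast_eq_zero_or_eq_one_of_two_eq_zero ((map_ofNat (Ideal.Quotient.mk _) 2).symm.trans
    (Ideal.Quotient.eq_zero_iff_mem.2 (Ideal.subset_span (by simp)))) n

theorem span_two_t_sub_one_mul_I : Ideal.span {2, t - 1} * I = Ideal.span {2} * I := by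
  rw [Ideal.span_insert, Ideal.sup_mul, sup_eq_left, I, Ideal.span_singleton_mul_span_singleton,
    Ideal.span_singleton_mul_span_singleton, Ideal.span_singleton_le_span_singleton]
  exact ⟨-1, by linear_combination t_sq⟩

theorem ext1_RmodI_Rmod2I_structure :
    (Nonempty ((ext1 (R ⧸ I) (R ⧸ Ideal.span ({2, t - 1} : Set R))) ≃ₗ[R]
        (R ⧸ Ideal.span ({2, t - 1} : Set R)))) ∧
    (∀ (M : Type) [AddCommGroup M] [Module R M]
      (f : (R ⧸ Ideal.span ({2, t - 1} : Set R)) →ₗ[R] M)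
      (g : M →ₗ[R] (R ⧸ I)),
      Function.Injective f → Function.Surjective g →
      LinearMap.range f = LinearMap.ker g →
      (Nonempty (M ≃ₗ[R] ((R ⧸ I) × (R ⧸ Ideal.span ({2, t - 1} : Set R)))) ∨
       Nonempty (M ≃ₗ[R] (R ⧸ (Ideal.span ({2} : Set R) * I))))) := by
  have ht_sub : t - 1 ∈ Ideal.span ({2, t - 1} : Set R) := Ideal.subset_span (by simp)
  have ht_add : t + 1 ∈ Ideal.span ({2, t - 1} : Set R) := by
    rw [show t + 1 = 2 + (t - 1) by ring]
    exact add_mem (Ideal.subset_span (by simp)) ht_sub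
  refine ⟨⟨isExactPair_t.extSuccLinearEquiv ?_ ?_ 0⟩, ?_⟩
  · rwa [Ideal.annihilator_quotient]
  · rwa [Ideal.annihilator_quotient]
  intro M _ _ f g hf hg hfg
  have hexact : Function.Exact f g := LinearMap.exact_iff.2 hfg.symm
  obtain ⟨m, hm⟩ := hg 1
  obtain ⟨ε, hε⟩ := hexact.exists_map_eq_smul hm
  rcases quotient_span_two_t_sub_one_eq_zero_or_eq_one ε with rfl | rfl
  · exact .inl (hexact.nonempty_linearEquiv_prod_of_smul_eq_zero hf hm (by rw [← hε, map_zero]))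
  · rw [← span_two_t_sub_one_mul_I]
    exact .inr (hexact.nonempty_linearEquiv_quotient_mul hf hm hε.symm)
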